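/- arXiv:2503.04591 — 3 statements merged into one kernel-verified Lean document; each statement's English description precedes it below -/
import Mathlib

section
/- For every n ≥ 1, the coefficient of X^n in the polynomial ∏_{j=1}^{n} ( Σ_{k=0}^{n} X^{j·k} / (k!)^j ) over ℚ equals |BP_n / ≡_0| / n!; equivalently, the exponential generating function of the sequence (|BP_n^0|)_{n∈ℕ} is ∏_{j ≥ 1} Σ_{k ≥ 0} (x^k / k!)^j. -/
open Finset Nat

/-- `μ` is a block-parallel update schedule (partitioned order) of size `n`:
a finite set of nonempty lists (o-blocks) of elements of `Fin n` such that
every element of `Fin n` occurs exactly once in exactly one o-block. -/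
def IsBP (n : ℕ) (μ : Finset (List (Fin n))) : Prop :=
  (∀ S ∈ μ, S ≠ []) ∧ ∀ i : Fin n, (μ.sum fun S => S.count i) = 1

/-- The number of substeps `ℓ = lcm` of the o-block lengths. -/
def bpLen {n : ℕ} (μ : Finset (List (Fin n))) : ℕ := μ.lcm List.length

/-- The block updated at substep `t`: `W_t = { S[t mod |S|] : S ∈ μ }`. -/
def blockAt {n : ℕ} (μ : Finset (List (Fin n))) (t : ℕ) : Finset (Fin n) :=
  μ.biUnion fun S => (S[t % S.length]?).toFinset

/-- `φ(μ)`: the rewriting of a block-parallel update schedule as a sequence of blocks. -/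
def phiBP {n : ℕ} (μ : Finset (List (Fin n))) : List (Finset (Fin n)) :=
  (List.range (bpLen μ)).map (blockAt μ)

/-!
Record a schedule by the map `i ↦ (j, r)` sending each element to the length `j` of its o-block
and to its position `r` in that o-block. The block at substep `t` is then `{i | t ≡ r (mod j)}`,
and since the period is a multiple of every `j`, these residue classes give back `(j, r)`; so
`φ(μ)` and the map determine each other. The maps that occur are exactly the balanced ones, in
which for each `j` every position `r < j` is taken by the same number `k_j` of elements (one per
o-block of length `j`): a balanced map is realised by lining up the elements of equal rank in
the fibers over `(j, 0), …, (j, j - 1)`. The balanced maps with given `k` are the maps with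
prescribed fiber sizes, so there are `n! / ∏_j (k_j!)^j` of them, and `∏_j (k_j!)^{-j}` is the
contribution of the terms `X^{j k_j} / (k_j!)^j` to the coefficient of `X^n`.
-/

theorem Finsupp.sum_single_one_apply {α β : Type*} [Fintype α] [DecidableEq β] (g : α → β)
    (b : β) : (∑ a, Finsupp.single (g a) 1 : β →₀ ℕ) b = #{a | g a = b} := by
  simp [Finsupp.finsetSum_apply, Finsupp.single_apply]

theorem Finsupp.sum_single_one_eq_indicator_iff {α β : Type*} [Fintype α] [DecidableEq β]
    {s : Finset β} {f : α → β} (hf : ∀ a, f a ∈ s) (c : β → ℕ) :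
    ∑ a, Finsupp.single (f a) 1 = Finsupp.indicator s (fun b _ => c b) ↔
      ∀ b ∈ s, #{a | f a = b} = c b := by
  simp only [Finsupp.ext_iff, Finsupp.sum_single_one_apply, Finsupp.indicator_apply]
  refine ⟨fun h b hb => by simpa [hb] using h b, fun h b => ?_⟩
  split_ifs with hb
  · exact h b hb
  · exact Finset.card_eq_zero.2 (Finset.filter_eq_empty_iff.2 fun a _ ha => hb (ha ▸ hf a))

theorem Finset.card_filter_fiber_card_eq_multinomial {α β : Type*} [Fintype α] [DecidableEq α]
    [DecidableEq β] (s : Finset β) (c : β → ℕ) (hc : ∑ b ∈ s, c b = Fintype.card α) :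
    #{f ∈ Fintype.piFinset fun _ : α => s | ∀ b ∈ s, #{a | f a = b} = c b} =
      Nat.multinomial s c := by
  open MvPolynomial in
  -- Both sides are the coefficient of `∏ b ∈ s, X b ^ c b` in `(∑ b ∈ s, X b) ^ card α`,
  -- expanded either as a product over `α` or by the multinomial theorem.
  have hexpand : (∑ b ∈ s, X b : MvPolynomial β ℕ) ^ Fintype.card α =
      ∑ f ∈ Fintype.piFinset (fun _ : α => s), monomial (∑ a, Finsupp.single (f a) 1) 1 := by
    rw [← Finset.card_univ, ← Finset.prod_const, Finset.prod_univ_sum]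
    simp [monomial_sum_one, X]
  have hmulti : (∑ b ∈ s, X b : MvPolynomial β ℕ) ^ Fintype.card α =
      ∑ k ∈ piAntidiag s (Fintype.card α),
        C (Nat.multinomial s k) * monomial (Finsupp.indicator s fun b _ => k b) 1 := by
    rw [Finset.sum_pow_eq_sum_piAntidiag]
    simp [Finsupp.indicator_eq_sum_single, monomial_sum_one, X_pow_eq_monomial]
  have hcoeff := congrArg (coeff (Finsupp.indicator s fun b _ => c b)) (hexpand.symm.trans hmulti)
  simp only [coeff_sum, coeff_monomial, coeff_C_mul, Finset.sum_boole, Nat.cast_id] at hcoeff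
  rw [Finset.filter_congr fun f hf => Finsupp.sum_single_one_eq_indicator_iff
    (Fintype.mem_piFinset.1 hf) c] at hcoeff
  rw [hcoeff, Finset.sum_eq_single (fun b => if b ∈ s then c b else 0)]
  · rw [if_pos, mul_one, Nat.multinomial_congr fun b hb => if_pos hb]
    ext b
    simp +contextual [Finsupp.indicator_apply]
  · intro k hk hne
    rw [if_neg, mul_zero]
    refine fun h => hne (funext fun b => ?_)
    have := Finsupp.ext_iff.1 h b
    by_cases hb : b ∈ s
    · simpa [Finsupp.indicator_apply, hb] using this
    · rw [if_neg hb]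
      by_contra h'
      exact hb ((mem_piAntidiag.1 hk).2 b h')
  · intro h
    refine absurd (mem_piAntidiag.2 ⟨?_, fun b hb => by by_contra h'; simp [h'] at hb⟩) h
    rw [← hc]
    exact Finset.sum_congr rfl fun b hb => if_pos hb

theorem Finset.range_filter_lt_of_le {j n : ℕ} (h : j ≤ n) : {r ∈ range n | r < j} = range j := by
  ext r
  simp only [Finset.mem_filter, Finset.mem_range]
  omega

theorem Nat.dvd_of_forall_mod_eq_iff {a b r : ℕ} (hr : r < a) (hrb : r < b)
    (h : ∀ t, t % a = r ↔ t % b = r) : a ∣ b := by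
  have : r + b ≡ r + 0 [MOD a] := by
    rw [add_zero, Nat.ModEq, Nat.mod_eq_of_lt hr]
    exact (h _).2 (by rw [Nat.add_mod_right, Nat.mod_eq_of_lt hrb])
  exact Nat.modEq_zero_iff_dvd.1 (Nat.ModEq.add_left_cancel' r this)

theorem Nat.eq_of_forall_mod_eq_iff {a b r s : ℕ} (hr : r < a) (hs : s < b)
    (h : ∀ t, t % a = r ↔ t % b = s) : a = b ∧ r = s := by
  have hrs : r = s := by
    have := (h r).1 (Nat.mod_eq_of_lt hr) ▸ Nat.mod_le r b
    have := (h s).2 (Nat.mod_eq_of_lt hs) ▸ Nat.mod_le s a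
    omega
  subst hrs
  exact ⟨Nat.dvd_antisymm (Nat.dvd_of_forall_mod_eq_iff hr hs h)
    (Nat.dvd_of_forall_mod_eq_iff hs hr fun t => (h t).symm), rfl⟩

open Polynomial in
theorem Polynomial.coeff_prod {ι R : Type*} [CommSemiring R] [DecidableEq ι] (s : Finset ι)
    (P : ι → R[X]) (n : ℕ) :
    (∏ j ∈ s, P j).coeff n = ∑ d ∈ s.finsuppAntidiag n, ∏ j ∈ s, (P j).coeff (d j) := by
  simp only [← Polynomial.coeff_coe, ← Polynomial.coeToPowerSeries.ringHom_apply, map_prod,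
    PowerSeries.coeff_prod]

theorem List.nodup_of_getElem_snd {α β : Type*} {L : List α} {f : α → β × ℕ}
    (h : ∀ r (hr : r < L.length), (f L[r]).2 = r) : L.Nodup :=
  List.nodup_iff_injective_get.2 fun a b hab => Fin.ext <| by
    simpa [h] using congrArg (fun x => (f x).2) hab

open Polynomial in
theorem Polynomial.coeff_sum_C_mul_X_pow_mul {R : Type*} [Semiring R] (a : ℕ → R) {j m N : ℕ}
    (hj : 0 < j) (hm : m / j ≤ N) :
    (∑ k ∈ Finset.range (N + 1), C (a k) * X ^ (j * k)).coeff m =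
      if j ∣ m then a (m / j) else 0 := by
  simp only [finsetSum_coeff, coeff_C_mul_X_pow]
  split_ifs with hdvd
  · rw [Finset.sum_eq_single (m / j)]
    · rw [if_pos (Nat.mul_div_cancel' hdvd).symm]
    · intro k _ hk
      rw [if_neg]
      rintro rfl
      exact hk (Nat.mul_div_cancel_left k hj).symm
    · intro h
      exact absurd (Finset.mem_range.2 (Nat.lt_succ_of_le hm)) h
  · exact Finset.sum_eq_zero fun k _ => if_neg fun h => hdvd ⟨k, h⟩

section

variable {n : ℕ}

theorem isBP_iff {μ : Finset (List (Fin n))} :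
    IsBP n μ ↔ (∀ S ∈ μ, S ≠ []) ∧ (∀ S ∈ μ, S.Nodup) ∧ ∀ i, ∃! S, S ∈ μ ∧ i ∈ S := by
  have count_sum {i : Fin n} (hnd : ∀ S ∈ μ, S.Nodup) :
      (μ.sum fun S => S.count i) = #{S ∈ μ | i ∈ S} := by
    rw [Finset.card_filter]
    refine Finset.sum_congr rfl fun S hS => ?_
    split_ifs with hi
    · exact List.count_eq_one_of_mem (hnd S hS) hi
    · exact List.count_eq_zero.2 hi
  have nodup_of (h : ∀ i : Fin n, (μ.sum fun S => S.count i) = 1) : ∀ S ∈ μ, S.Nodup :=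
    fun S hS => List.nodup_iff_count_le_one.2 fun i =>
      h i ▸ Finset.single_le_sum (fun _ _ => Nat.zero_le _) hS
  have unique_iff (i : Fin n) : #{S ∈ μ | i ∈ S} = 1 ↔ ∃! S, S ∈ μ ∧ i ∈ S := by
    simp only [Finset.card_eq_one_iff_existsUnique, Finset.mem_filter]
  constructor
  · rintro ⟨hne, h⟩
    exact ⟨hne, nodup_of h, fun i => (unique_iff i).1 (count_sum (nodup_of h) ▸ h i)⟩
  · rintro ⟨hne, hnd, h⟩
    exact ⟨hne, fun i => (count_sum hnd).trans ((unique_iff i).2 (h i))⟩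

/-- A map with `f i = (j, r)` stands for a schedule in which `i` is the `r`-th entry of an
o-block of length `j`. -/
def posBlock (f : Fin n → ℕ × ℕ) (t : ℕ) : Finset (Fin n) := {i | t % (f i).1 = (f i).2}

def posPeriod (f : Fin n → ℕ × ℕ) : ℕ := Finset.univ.lcm fun i => (f i).1

def posSeq (f : Fin n → ℕ × ℕ) : List (Finset (Fin n)) :=
  (List.range (posPeriod f)).map (posBlock f)

theorem dvd_posPeriod (f : Fin n → ℕ × ℕ) (i : Fin n) : (f i).1 ∣ posPeriod f :=
  Finset.dvd_lcm (Finset.mem_univ i)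

theorem posBlock_mod_posPeriod (f : Fin n → ℕ × ℕ) (t : ℕ) :
    posBlock f (t % posPeriod f) = posBlock f t := by
  ext i
  simp only [posBlock, Finset.mem_filter, Finset.mem_univ, true_and,
    Nat.mod_mod_of_dvd _ (dvd_posPeriod f i)]

theorem posPeriod_pos {f : Fin n → ℕ × ℕ} (hf : ∀ i, (f i).2 < (f i).1) : 0 < posPeriod f := by
  refine Nat.pos_of_ne_zero fun h => ?_
  obtain ⟨i, -, hi⟩ := Finset.lcm_eq_zero_iff.1 h
  exact (hf i).ne_bot hi

theorem posSeq_injOn : Set.InjOn (posSeq (n := n)) {f | ∀ i, (f i).2 < (f i).1} := by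
  intro f hf g hg hfg
  have hper : posPeriod f = posPeriod g := by
    simpa [posSeq] using congrArg List.length hfg
  have hblock (t : ℕ) : posBlock f t = posBlock g t := by
    have ht := Nat.mod_lt t (posPeriod_pos hf)
    have := congrArg (·[t % posPeriod f]?) hfg
    simp only [posSeq, List.getElem?_map, List.getElem?_range ht, ← hper] at this
    rw [← posBlock_mod_posPeriod f, ← posBlock_mod_posPeriod g, ← hper]
    simpa using this
  funext i
  obtain ⟨h1, h2⟩ := Nat.eq_of_forall_mod_eq_iff (hf i) (hg i) fun t => by
    simpa [posBlock] using congrArg (i ∈ ·) (hblock t)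
  exact Prod.ext h1 h2

theorem phiBP_eq_posSeq {μ : Finset (List (Fin n))} {f : Fin n → ℕ × ℕ}
    (hne : ∀ S ∈ μ, S ≠ []) (hcover : ∀ i, ∃ S ∈ μ, i ∈ S)
    (hpos : ∀ S ∈ μ, ∀ r (hr : r < S.length), f S[r] = (S.length, r)) :
    phiBP μ = posSeq f := by
  have hmem (i : Fin n) :
      ∃ S ∈ μ, ∃ hr : (f i).2 < S.length, (f i).1 = S.length ∧ S[(f i).2] = i := by
    obtain ⟨S, hS, hi⟩ := hcover i
    obtain ⟨r, hr, rfl⟩ := List.mem_iff_getElem.1 hi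
    simp only [hpos S hS r hr]
    exact ⟨S, hS, hr, rfl, rfl⟩
  have hper : bpLen μ = posPeriod f := by
    refine Nat.dvd_antisymm (Finset.lcm_dvd fun S hS => ?_) (Finset.lcm_dvd fun i _ => ?_)
    · have h0 : 0 < S.length := List.length_pos_iff.2 (hne S hS)
      simpa [hpos S hS 0 h0] using dvd_posPeriod f S[0]
    · obtain ⟨S, hS, -, hlen, -⟩ := hmem i
      rw [hlen]
      exact Finset.dvd_lcm hS
  have hblock (t : ℕ) : blockAt μ t = posBlock f t := by
    ext i
    simp only [blockAt, posBlock, Finset.mem_biUnion, Option.mem_toFinset, Option.mem_def,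
      Finset.mem_filter, Finset.mem_univ, true_and, List.getElem?_eq_some_iff]
    constructor
    · rintro ⟨S, hS, ht, rfl⟩
      simp [hpos S hS _ ht]
    · intro ht
      obtain ⟨S, hS, hr, hlen, hi⟩ := hmem i
      have ht' : t % S.length = (f i).2 := hlen ▸ ht
      exact ⟨S, hS, ht' ▸ hr, by simpa only [ht'] using hi⟩
  simp only [phiBP, posSeq, hper, funext hblock]

def IsBalanced (f : Fin n → ℕ × ℕ) : Prop :=
  (∀ i, (f i).2 < (f i).1 ∧ (f i).1 ≤ n) ∧
    ∀ j r, r < j → #{i | f i = (j, r)} = #{i | f i = (j, 0)}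

theorem IsBP.exists_isBalanced {μ : Finset (List (Fin n))} (h : IsBP n μ) :
    ∃ f, IsBalanced f ∧ posSeq f = phiBP μ := by
  obtain ⟨hne, hnd, huniq⟩ := isBP_iff.1 h
  choose S hS hS_uniq using huniq
  set f : Fin n → ℕ × ℕ := fun i => ((S i).length, (S i).idxOf i)
  have hpos (T) (hT : T ∈ μ) (r) (hr : r < T.length) : f T[r] = (T.length, r) := by
    have hST : S T[r] = T := (hS_uniq _ T ⟨hT, List.getElem_mem hr⟩).symm
    simp only [f, hST, (hnd T hT).idxOf_getElem]
  have hfiber (j r : ℕ) (hr : r < j) : #{i | f i = (j, r)} = #{T ∈ μ | T.length = j} := by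
    refine Finset.card_bij (fun i _ => S i) (fun i hi => ?_) (fun i hi i' hi' hii' => ?_)
      (fun T hT => ?_)
    · simp only [Finset.mem_filter, Finset.mem_univ, true_and, f, Prod.mk.injEq] at hi ⊢
      exact ⟨(hS i).1, hi.1⟩
    · simp only [Finset.mem_filter, Finset.mem_univ, true_and, f, Prod.mk.injEq] at hi hi'
      have hget (i : Fin n) (hi : (S i).idxOf i = r) : ∃ h : r < (S i).length, (S i)[r] = i :=
        hi ▸ ⟨_, List.getElem_idxOf (List.idxOf_lt_length_of_mem (hS i).2)⟩
      obtain ⟨h, hir⟩ := hget i hi.2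
      obtain ⟨h', hi'r⟩ := hget i' hi'.2
      rw [← hir, ← hi'r]
      simp only [hii']
    · obtain ⟨hTμ, rfl⟩ := Finset.mem_filter.1 hT
      exact ⟨T[r], by simp [hpos T hTμ r hr], (hS_uniq _ T ⟨hTμ, List.getElem_mem hr⟩).symm⟩
  refine ⟨f, ⟨fun i => ⟨List.idxOf_lt_length_of_mem (hS i).2, ?_⟩, fun j r hr => ?_⟩, ?_⟩
  · simpa using (hnd _ (hS i).1).length_le_card
  · rw [hfiber j r hr, hfiber j 0 (by omega)]
  · exact (phiBP_eq_posSeq hne (fun i => ⟨S i, hS i⟩) hpos).symm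

def fiberList (f : Fin n → ℕ × ℕ) (p : ℕ × ℕ) : List (Fin n) :=
  ({i | f i = p} : Finset (Fin n)).sort (· ≤ ·)

def fiberRank (f : Fin n → ℕ × ℕ) (i : Fin n) : ℕ := (fiberList f (f i)).idxOf i

/-- The o-block through `i` picks, at each position `r`, the element of the same rank as `i`
in the fiber of `((f i).1, r)`. -/
def oBlockOf (f : Fin n → ℕ × ℕ) (i : Fin n) : List (Fin n) :=
  List.ofFn fun r : Fin (f i).1 => (fiberList f ((f i).1, r)).getD (fiberRank f i) i

def scheduleOf (f : Fin n → ℕ × ℕ) : Finset (List (Fin n)) := Finset.univ.image (oBlockOf f)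

section oBlockOf

variable {f : Fin n → ℕ × ℕ}

theorem mem_fiberList {p : ℕ × ℕ} {i : Fin n} : i ∈ fiberList f p ↔ f i = p := by
  simp [fiberList]

theorem length_fiberList (p : ℕ × ℕ) : (fiberList f p).length = #{i | f i = p} :=
  Finset.length_sort _

theorem fiberRank_lt_length (i : Fin n) : fiberRank f i < (fiberList f (f i)).length :=
  List.idxOf_lt_length_of_mem (mem_fiberList.2 rfl)

theorem IsBalanced.fiberRank_lt_length (hf : IsBalanced f) {i : Fin n} {r : ℕ}
    (hr : r < (f i).1) : fiberRank f i < (fiberList f ((f i).1, r)).length := by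
  rw [length_fiberList, hf.2 _ _ hr, ← hf.2 _ _ (hf.1 i).1, ← length_fiberList]
  exact _root_.fiberRank_lt_length i

theorem length_oBlockOf (i : Fin n) : (oBlockOf f i).length = (f i).1 := List.length_ofFn

theorem IsBalanced.getElem_oBlockOf (hf : IsBalanced f) {i : Fin n} {r : ℕ}
    (hr : r < (oBlockOf f i).length) :
    (oBlockOf f i)[r] = (fiberList f ((f i).1, r))[fiberRank f i]'
      (hf.fiberRank_lt_length (length_oBlockOf i ▸ hr)) := by
  simp only [oBlockOf, List.getElem_ofFn]
  exact List.getD_eq_getElem _ _ _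

theorem IsBalanced.apply_getElem_oBlockOf (hf : IsBalanced f) {i : Fin n} {r : ℕ}
    (hr : r < (oBlockOf f i).length) : f (oBlockOf f i)[r] = ((oBlockOf f i).length, r) := by
  rw [hf.getElem_oBlockOf, mem_fiberList.1 (List.getElem_mem (l := fiberList f _) _),
    length_oBlockOf]

theorem IsBalanced.fiberRank_getElem_oBlockOf (hf : IsBalanced f) {i : Fin n} {r : ℕ}
    (hr : r < (oBlockOf f i).length) : fiberRank f (oBlockOf f i)[r] = fiberRank f i := by
  rw [fiberRank, hf.apply_getElem_oBlockOf, length_oBlockOf, hf.getElem_oBlockOf]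
  exact (Finset.sort_nodup _ _).idxOf_getElem _ _

theorem IsBalanced.mem_oBlockOf_self (hf : IsBalanced f) (i : Fin n) : i ∈ oBlockOf f i := by
  have hr : (f i).2 < (oBlockOf f i).length := (length_oBlockOf i).symm ▸ (hf.1 i).1
  convert List.getElem_mem hr
  rw [hf.getElem_oBlockOf]
  simp only [Prod.mk.eta]
  exact (List.getElem_idxOf (_root_.fiberRank_lt_length i)).symm

theorem IsBalanced.oBlockOf_eq_of_mem (hf : IsBalanced f) {i i' : Fin n}
    (h : i' ∈ oBlockOf f i) : oBlockOf f i' = oBlockOf f i := by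
  obtain ⟨r, hr, rfl⟩ := List.mem_iff_getElem.1 h
  have hfst : (f (oBlockOf f i)[r]).1 = (f i).1 := by
    rw [hf.apply_getElem_oBlockOf, length_oBlockOf]
  have hrank := hf.fiberRank_getElem_oBlockOf hr
  generalize (oBlockOf f i)[r] = i' at hfst hrank ⊢
  refine List.ext_getElem (by rw [length_oBlockOf, length_oBlockOf, hfst]) fun s hs hs' => ?_
  simp only [hf.getElem_oBlockOf, hfst, hrank]

theorem IsBalanced.isBP_scheduleOf (hf : IsBalanced f) : IsBP n (scheduleOf f) := by
  refine isBP_iff.2 ⟨?_, ?_, fun i => ⟨oBlockOf f i, ⟨?_, hf.mem_oBlockOf_self i⟩, ?_⟩⟩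
  · simp only [scheduleOf, Finset.mem_image, Finset.mem_univ, true_and]
    rintro _ ⟨i, rfl⟩
    exact List.ne_nil_of_mem (hf.mem_oBlockOf_self i)
  · simp only [scheduleOf, Finset.mem_image, Finset.mem_univ, true_and]
    rintro _ ⟨i, rfl⟩
    exact List.nodup_of_getElem_snd (f := f) fun r hr => by rw [hf.apply_getElem_oBlockOf]
  · exact Finset.mem_image_of_mem _ (Finset.mem_univ i)
  · rintro T ⟨hT, hiT⟩
    obtain ⟨i', -, rfl⟩ := Finset.mem_image.1 hT
    exact (hf.oBlockOf_eq_of_mem hiT).symm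

theorem IsBalanced.phiBP_scheduleOf (hf : IsBalanced f) : phiBP (scheduleOf f) = posSeq f := by
  obtain ⟨hne, -, huniq⟩ := isBP_iff.1 hf.isBP_scheduleOf
  refine phiBP_eq_posSeq hne (fun i => (huniq i).exists) fun T hT r hr => ?_
  obtain ⟨i, -, rfl⟩ := Finset.mem_image.1 hT
  exact hf.apply_getElem_oBlockOf hr

end oBlockOf

theorem setOf_phiBP_eq_image_posSeq :
    {L | ∃ μ : Finset (List (Fin n)), IsBP n μ ∧ phiBP μ = L} = posSeq '' {f | IsBalanced f} := by
  ext L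
  constructor
  · rintro ⟨μ, hμ, rfl⟩
    exact hμ.exists_isBalanced
  · rintro ⟨f, hf, rfl⟩
    exact ⟨scheduleOf f, hf.isBP_scheduleOf, hf.phiBP_scheduleOf⟩

noncomputable def lengthProfile (f : Fin n → ℕ × ℕ) : ℕ →₀ ℕ := ∑ i, Finsupp.single (f i).1 1

theorem lengthProfile_apply (f : Fin n → ℕ × ℕ) (j : ℕ) :
    lengthProfile f j = #{i | (f i).1 = j} :=
  Finsupp.sum_single_one_apply _ j

noncomputable def lengthProfiles (n : ℕ) : Finset (ℕ →₀ ℕ) :=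
  {d ∈ (Finset.Icc 1 n).finsuppAntidiag n | ∀ j ∈ Finset.Icc 1 n, j ∣ d j}

def blockCounts (d : ℕ →₀ ℕ) (p : ℕ × ℕ) : ℕ := if p.2 < p.1 then d p.1 / p.1 else 0

section counting

variable {f : Fin n → ℕ × ℕ}

theorem IsBalanced.mem_Icc_product_range (hf : IsBalanced f) (i : Fin n) :
    f i ∈ Finset.Icc 1 n ×ˢ Finset.range n := by
  have := hf.1 i
  simp only [Finset.mem_product, Finset.mem_Icc, Finset.mem_range]
  omega

theorem IsBalanced.card_fst_eq (hf : IsBalanced f) (j : ℕ) :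
    #{i | (f i).1 = j} = j * #{i | f i = (j, 0)} := by
  rw [Finset.card_eq_sum_card_fiberwise (f := fun i => (f i).2) (t := Finset.range j)]
  · rw [Finset.sum_congr rfl fun r hr => ?_, Finset.sum_const, Finset.card_range, smul_eq_mul]
    rw [Finset.filter_filter, ← hf.2 j r (Finset.mem_range.1 hr)]
    congr 1
    ext i
    simp [Prod.ext_iff]
  · intro i hi
    have := (hf.1 i).1
    simp only [Finset.coe_filter, Finset.mem_univ, true_and, Set.mem_ofPred_eq,
      Finset.coe_range, Set.mem_Iio] at hi ⊢
    omega

theorem IsBalanced.lengthProfile_mem (hf : IsBalanced f) : lengthProfile f ∈ lengthProfiles n := by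
  have hfst (i : Fin n) : (f i).1 ∈ Finset.Icc 1 n :=
    (Finset.mem_product.1 (hf.mem_Icc_product_range i)).1
  simp only [lengthProfiles, Finset.mem_filter, Finset.mem_finsuppAntidiag, lengthProfile_apply]
  refine ⟨⟨?_, fun j hj => ?_⟩, fun j _ => hf.card_fst_eq j ▸ dvd_mul_right j _⟩
  · rw [← Finset.card_eq_sum_card_fiberwise fun i _ => hfst i]
    simp
  · rw [Finsupp.mem_support_iff, lengthProfile_apply, ← Nat.pos_iff_ne_zero,
      Finset.card_pos] at hj
    obtain ⟨i, hi⟩ := hj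
    exact (Finset.mem_filter.1 hi).2 ▸ hfst i

theorem IsBalanced.card_eq_blockCounts (hf : IsBalanced f) (p : ℕ × ℕ) :
    #{i | f i = p} = blockCounts (lengthProfile f) p := by
  obtain ⟨j, r⟩ := p
  unfold blockCounts
  split_ifs with hr
  · rw [lengthProfile_apply, hf.card_fst_eq, Nat.mul_div_cancel_left _ (by omega), hf.2 j r hr]
  · refine Finset.card_eq_zero.2 (Finset.filter_eq_empty_iff.2 fun i _ hi => hr ?_)
    simpa [hi] using (hf.1 i).1

theorem isBalanced_of_card_eq_blockCounts {d : ℕ →₀ ℕ} (hd : d ∈ lengthProfiles n)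
    (hs : ∀ i, f i ∈ Finset.Icc 1 n ×ˢ Finset.range n)
    (hc : ∀ p ∈ Finset.Icc 1 n ×ˢ Finset.range n, #{i | f i = p} = blockCounts d p) :
    IsBalanced f ∧ lengthProfile f = d := by
  simp only [lengthProfiles, Finset.mem_filter, Finset.mem_finsuppAntidiag] at hd
  obtain ⟨⟨-, hsupp⟩, hdvd⟩ := hd
  have hfst (i : Fin n) : (f i).1 ∈ Finset.Icc 1 n := (Finset.mem_product.1 (hs i)).1
  have hlt (i : Fin n) : (f i).2 < (f i).1 := by
    by_contra h
    have := hc _ (hs i)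
    simp only [blockCounts, h, if_false, Finset.card_eq_zero, Finset.filter_eq_empty_iff] at this
    exact this (Finset.mem_univ i) rfl
  have hfiber (j r : ℕ) (hr : r < j) :
      #{i | f i = (j, r)} = if j ∈ Finset.Icc 1 n then d j / j else 0 := by
    split_ifs with hj
    · rw [hc (j, r) (by simp only [Finset.mem_Icc] at hj; simp; omega), blockCounts, if_pos hr]
    · exact Finset.card_eq_zero.2
        (Finset.filter_eq_empty_iff.2 fun i _ hi => hj (by simpa [hi] using hfst i))
  have hf : IsBalanced f := ⟨fun i => ⟨hlt i, (Finset.mem_Icc.1 (hfst i)).2⟩,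
    fun j r hr => by rw [hfiber j r hr, hfiber j 0 (by omega)]⟩
  refine ⟨hf, Finsupp.ext fun j => ?_⟩
  rw [lengthProfile_apply]
  by_cases hj : j ∈ Finset.Icc 1 n
  · rw [hf.card_fst_eq, hfiber j 0 (Finset.mem_Icc.1 hj).1, if_pos hj,
      Nat.mul_div_cancel' (hdvd j hj)]
  · rw [Finset.card_eq_zero.2
      (Finset.filter_eq_empty_iff.2 fun i _ (hi : (f i).1 = j) => hj (hi ▸ hfst i))]
    exact (Finsupp.notMem_support_iff.1 fun h => hj (hsupp h)).symm

theorem isBalanced_and_lengthProfile_eq_iff {d : ℕ →₀ ℕ} (hd : d ∈ lengthProfiles n) :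
    IsBalanced f ∧ lengthProfile f = d ↔ (∀ i, f i ∈ Finset.Icc 1 n ×ˢ Finset.range n) ∧
      ∀ p ∈ Finset.Icc 1 n ×ˢ Finset.range n, #{i | f i = p} = blockCounts d p := by
  refine ⟨?_, fun ⟨hs, hc⟩ => isBalanced_of_card_eq_blockCounts hd hs hc⟩
  rintro ⟨hf, rfl⟩
  exact ⟨hf.mem_Icc_product_range, fun p _ => hf.card_eq_blockCounts p⟩

theorem sum_blockCounts {d : ℕ →₀ ℕ} (hd : d ∈ lengthProfiles n) :
    ∑ p ∈ Finset.Icc 1 n ×ˢ Finset.range n, blockCounts d p = n := by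
  simp only [lengthProfiles, Finset.mem_filter, Finset.mem_finsuppAntidiag] at hd
  obtain ⟨⟨hsum, -⟩, hdvd⟩ := hd
  rw [Finset.sum_product]
  refine Eq.trans (Finset.sum_congr rfl fun j hj => ?_) hsum
  rw [← Nat.mul_div_cancel' (hdvd j hj)]
  simp only [blockCounts, ← Finset.sum_filter,
    Finset.range_filter_lt_of_le (Finset.mem_Icc.1 hj).2, Finset.sum_const, Finset.card_range,
    smul_eq_mul]

theorem prod_factorial_blockCounts (d : ℕ →₀ ℕ) :
    ∏ p ∈ Finset.Icc 1 n ×ˢ Finset.range n, (blockCounts d p)! =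
      ∏ j ∈ Finset.Icc 1 n, (d j / j)! ^ j := by
  rw [Finset.prod_product]
  refine Finset.prod_congr rfl fun j hj => ?_
  simp only [blockCounts, apply_ite Nat.factorial, Nat.factorial_zero, ← Finset.prod_filter,
    Finset.range_filter_lt_of_le (Finset.mem_Icc.1 hj).2, Finset.prod_const, Finset.card_range]

theorem ncard_setOf_isBalanced :
    {f : Fin n → ℕ × ℕ | IsBalanced f}.ncard =
      ∑ d ∈ lengthProfiles n,
        Nat.multinomial (Finset.Icc 1 n ×ˢ Finset.range n) (blockCounts d) := by
  classical
  have hfin : {f : Fin n → ℕ × ℕ | IsBalanced f} =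
      ({f ∈ Fintype.piFinset fun _ => Finset.Icc 1 n ×ˢ Finset.range n | IsBalanced f} :
        Finset (Fin n → ℕ × ℕ)) := by
    ext f
    simpa using fun hf : IsBalanced f => hf.mem_Icc_product_range
  rw [hfin, Set.ncard_coe_finset, Finset.card_eq_sum_card_fiberwise (f := lengthProfile)
    fun f hf => (Finset.mem_filter.1 hf).2.lengthProfile_mem]
  refine Finset.sum_congr rfl fun d hd => ?_
  rw [← Finset.card_filter_fiber_card_eq_multinomial _ _
    (by rw [sum_blockCounts hd, Fintype.card_fin]), Finset.filter_filter]
  congr 1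
  ext f
  simp only [Finset.mem_filter, Fintype.mem_piFinset, ← isBalanced_and_lengthProfile_eq_iff hd]
  exact ⟨fun h => h.2, fun h => ⟨h.1.mem_Icc_product_range, h⟩⟩

end counting

open Polynomial in
theorem coeff_prod_sum_C_mul_X_pow (n : ℕ) :
    (∏ j ∈ Finset.Icc 1 n, ∑ k ∈ Finset.range (n + 1),
        (C ((1 : ℚ) / (k ! : ℚ) ^ j)) * X ^ (j * k)).coeff n =
      ∑ d ∈ lengthProfiles n, ∏ j ∈ Finset.Icc 1 n, (1 : ℚ) / ((d j / j)! : ℚ) ^ j := by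
  rw [Polynomial.coeff_prod, lengthProfiles, Finset.sum_filter]
  refine Finset.sum_congr rfl fun d hd => ?_
  rw [← Finset.prod_ite_zero]
  refine Finset.prod_congr rfl fun j hj => Polynomial.coeff_sum_C_mul_X_pow_mul _
    (Finset.mem_Icc.1 hj).1 ((Nat.div_le_self _ _).trans ?_)
  obtain ⟨hsum, -⟩ := Finset.mem_finsuppAntidiag.1 hd
  exact hsum ▸ Finset.single_le_sum (fun _ _ => Nat.zero_le _) hj

theorem cast_multinomial_blockCounts {d : ℕ →₀ ℕ} (hd : d ∈ lengthProfiles n) :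
    (Nat.multinomial (Finset.Icc 1 n ×ˢ Finset.range n) (blockCounts d) : ℚ) =
      n ! * ∏ j ∈ Finset.Icc 1 n, (1 : ℚ) / ((d j / j)! : ℚ) ^ j := by
  have hspec := Nat.multinomial_spec (Finset.Icc 1 n ×ˢ Finset.range n) (blockCounts d)
  rw [sum_blockCounts hd, prod_factorial_blockCounts] at hspec
  have hpos : (∏ j ∈ Finset.Icc 1 n, ((d j / j)! : ℚ) ^ j) ≠ 0 :=
    Finset.prod_ne_zero_iff.2 fun _ _ => pow_ne_zero _ (mod_cast Nat.factorial_ne_zero _)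
  rw [Finset.prod_div_distrib, Finset.prod_const_one, mul_one_div, eq_div_iff hpos, mul_comm]
  exact_mod_cast hspec

end

open Polynomial in
theorem egf_bp_mod_eqzero_general (n : ℕ) :
    (∏ j ∈ Finset.Icc 1 n, ∑ k ∈ Finset.range (n + 1),
        (C ((1 : ℚ) / (k ! : ℚ) ^ j)) * X ^ (j * k)).coeff n =
      (({L : List (Finset (Fin n)) |
          ∃ μ : Finset (List (Fin n)), IsBP n μ ∧ phiBP μ = L}.ncard : ℚ)) / (n ! : ℚ) := by
  rw [coeff_prod_sum_C_mul_X_pow, setOf_phiBP_eq_image_posSeq,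
    (posSeq_injOn.mono fun f hf i => (hf.1 i).1).ncard_image,
    ncard_setOf_isBalanced, Nat.cast_sum, Finset.sum_div]
  refine Finset.sum_congr rfl fun d hd => ?_
  rw [cast_multinomial_blockCounts hd, mul_div_cancel_left₀ _ (mod_cast Nat.factorial_ne_zero n)]

open Polynomial in
/-- The coefficient of `X^n` in `∏_{j=1}^{n} (Σ_{k=0}^{n} X^{j·k} / (k!)^j)` over `ℚ`
equals `|BP_n/≡₀| / n!`, where `|BP_n/≡₀|` is the number of distinct values of `φ`
on `BP_n` (equivalently, the exponential generating function of `(|BP_n^0|)` is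
`∏_{j≥1} Σ_{k≥0} (x^k/k!)^j`; parts of size `> n` and multiplicities `> n` cannot
contribute to the coefficient of `X^n`). -/
theorem egf_bp_mod_eqzero (n : ℕ) (hn : 1 ≤ n) :
    (∏ j ∈ Finset.Icc 1 n, ∑ k ∈ Finset.range (n + 1),
        (C ((1 : ℚ) / (k ! : ℚ) ^ j)) * X ^ (j * k)).coeff n =
      (({L : List (Finset (Fin n)) |
          ∃ μ : Finset (List (Fin n)), IsBP n μ ∧ phiBP μ = L}.ncard : ℚ)) / (n ! : ℚ) :=
  egf_bp_mod_eqzero_general n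
end

section
/- For any two block-parallel update schedules μ, μ' ∈ BP_n, one has φ(μ) = φ(μ') if and only if for every Boolean automata network f of size n, the dynamics coincide: f^{⟨μ⟩} = f^{⟨μ'⟩}. -/
open Finset Nat

/-- Update of the automata in block `W`: `f^{(W)}(x)_i = f_i(x)` if `i ∈ W`, else `x_i`. -/
def blockUpdate {n : ℕ} (f : Fin n → (Fin n → Bool) → Bool) (W : Finset (Fin n))
    (x : Fin n → Bool) : Fin n → Bool :=
  fun i => if i ∈ W then f i x else x i

/-- Sequential application of a list of block updates (leftmost block first). -/
def seqUpdate {n : ℕ} (f : Fin n → (Fin n → Bool) → Bool)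
    (Ws : List (Finset (Fin n))) (x : Fin n → Bool) : Fin n → Bool :=
  Ws.foldl (fun y W => blockUpdate f W y) x

/-- The block-parallel dynamics `f^⟨μ⟩ = f^{(W_{ℓ−1})} ∘ ⋯ ∘ f^{(W_0)}`. -/
def bpUpdate {n : ℕ} (f : Fin n → (Fin n → Bool) → Bool) (μ : Finset (List (Fin n))) :
    (Fin n → Bool) → (Fin n → Bool) :=
  seqUpdate f (phiBP μ)

/-! Start every network from the all-false configuration and let automata act as latches: once
switched on they stay on. The latch `b` with rule `x_b ∨ ¬ x_a` ends on iff `b` is updated no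
later than `a` for the first time, so the dynamics determine the order of the positions of
automata in their o-blocks, hence the positions themselves. Positions count the o-blocks longer
than each `v`, so they fix the multiset of o-block lengths and `ℓ`. If the block sequences first
differ at a substep `t` where `i` is updated under `μ` only, arithmetic forces `t = q + p` with
`q` the position of `i` and `p < p'` its o-block lengths under `μ` and `μ'`; a latch `i` armed
by a latch `b` switched on before `t` and disarmed by a latch `c` switched on in `[t, q + p')`
then ends on under `μ` but not under `μ'`. -/

variable {n : ℕ}

theorem eq_or_add_le_of_mod_eq {t p q : ℕ} (hq : q < p) (h : t % p = q) :
    t = q ∨ q + p ≤ t := by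
  rcases Nat.mod_eq_iff.1 h with ⟨rfl, -⟩ | ⟨-, k, rfl⟩
  · omega
  · rcases k with _ | k
    · simp
    · rw [Nat.mul_succ]; omega

theorem eq_add_and_lt_of_first_mod_ne {t p p' q : ℕ} (hp : q < p) (hp' : q < p')
    (ht : t % p = q) (ht' : t % p' ≠ q) (hbelow : ∀ s < t, (s % p = q ↔ s % p' = q)) :
    t = q + p ∧ p < p' := by
  have hqp : (q + p) % p = q := by rw [Nat.add_mod_right, Nat.mod_eq_of_lt hp]
  have hqp' : (q + p') % p' = q := by rw [Nat.add_mod_right, Nat.mod_eq_of_lt hp']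
  have hle : q + p ≤ t := (eq_or_add_le_of_mod_eq hp ht).resolve_left
    (by rintro rfl; exact ht' (Nat.mod_eq_of_lt hp'))
  have hlt : p < p' := by
    by_contra! hge
    rcases (Nat.le_trans (by omega : q + p' ≤ q + p) hle).lt_or_eq with hlt | heq
    · have := eq_or_add_le_of_mod_eq hp ((hbelow _ hlt).2 hqp')
      exact ht' (by rw [show p' = p by omega, ht])
    · exact ht' (heq ▸ hqp')
  refine ⟨le_antisymm ?_ hle, hlt⟩
  by_contra! hgt
  have := eq_or_add_le_of_mod_eq hp' ((hbelow _ hgt).1 hqp)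
  omega

noncomputable def bpBlock (μ : Finset (List (Fin n))) (i : Fin n) : List (Fin n) :=
  if h : ∃ S ∈ μ, i ∈ S then h.choose else []

noncomputable def bpPos (μ : Finset (List (Fin n))) (i : Fin n) : ℕ := (bpBlock μ i).idxOf i

noncomputable def bpPeriod (μ : Finset (List (Fin n))) (i : Fin n) : ℕ := (bpBlock μ i).length

theorem length_dvd_bpLen {μ : Finset (List (Fin n))} {S : List (Fin n)} (hS : S ∈ μ) :
    S.length ∣ bpLen μ :=
  Finset.dvd_lcm hS

theorem bpLen_dvd_of_forall_exists_length_eq {μ μ' : Finset (List (Fin n))}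
    (h : ∀ S ∈ μ, ∃ S' ∈ μ', S'.length = S.length) : bpLen μ ∣ bpLen μ' :=
  Finset.lcm_dvd fun S hS => by
    obtain ⟨S', hS', hlen⟩ := h S hS
    exact hlen ▸ length_dvd_bpLen hS'

def traj (f : Fin n → (Fin n → Bool) → Bool) (W : ℕ → Finset (Fin n)) (x : Fin n → Bool)
    (s : ℕ) : Fin n → Bool :=
  seqUpdate f ((List.range s).map W) x

theorem traj_succ (f : Fin n → (Fin n → Bool) → Bool) (W : ℕ → Finset (Fin n))
    (x : Fin n → Bool) (s : ℕ) :
    traj f W x (s + 1) = blockUpdate f (W s) (traj f W x s) := by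
  simp only [traj, seqUpdate, List.range_succ, List.map_append, List.foldl_append]
  rfl

theorem bpUpdate_eq_traj (f : Fin n → (Fin n → Bool) → Bool) (μ : Finset (List (Fin n)))
    (x : Fin n → Bool) : bpUpdate f μ x = traj f (blockAt μ) x (bpLen μ) :=
  rfl

def latchNet (P : Fin n → (Fin n → Bool) → Bool) : Fin n → (Fin n → Bool) → Bool :=
  fun j x => x j || P j x

theorem traj_latchNet_eq_true_iff (P : Fin n → (Fin n → Bool) → Bool)
    (W : ℕ → Finset (Fin n)) (x : Fin n → Bool) (j : Fin n) (s : ℕ) :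
    traj (latchNet P) W x s j = true ↔
      x j = true ∨ ∃ t < s, j ∈ W t ∧ P j (traj (latchNet P) W x t) = true := by
  induction s with
  | zero => simp [traj, seqUpdate]
  | succ s ih =>
    have hlt : ∀ t, t < s + 1 ↔ t < s ∨ t = s := fun t => Nat.lt_succ_iff_lt_or_eq
    by_cases hj : j ∈ W s <;>
      simp [traj_succ, blockUpdate, latchNet, hj, ih, hlt, or_and_right, exists_or, or_assoc]

def orderNet (a b : Fin n) : Fin n → (Fin n → Bool) → Bool :=
  latchNet fun j x => decide (j = a) || (decide (j = b) && !x a)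

def fireNet (i b c : Fin n) : Fin n → (Fin n → Bool) → Bool :=
  latchNet fun j x =>
    decide (j = b) || (decide (j = c) && x b) || (decide (j = i) && x b && !x c)

namespace IsBP

variable {μ μ' : Finset (List (Fin n))}

theorem exists_mem (hμ : IsBP n μ) (i : Fin n) : ∃ S ∈ μ, i ∈ S := by
  by_contra! h
  have := hμ.2 i
  rw [Finset.sum_eq_zero fun S hS => List.count_eq_zero.2 (h S hS)] at this
  exact zero_ne_one this

theorem count_le_one (hμ : IsBP n μ) {S : List (Fin n)} (hS : S ∈ μ) (i : Fin n) :
    S.count i ≤ 1 :=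
  hμ.2 i ▸ Finset.single_le_sum (fun _ _ => Nat.zero_le _) hS

theorem nodup (hμ : IsBP n μ) {S : List (Fin n)} (hS : S ∈ μ) : S.Nodup :=
  List.nodup_iff_count_le_one.2 (hμ.count_le_one hS)

theorem eq_of_mem (hμ : IsBP n μ) {S T : List (Fin n)} (hS : S ∈ μ) (hT : T ∈ μ) {i : Fin n}
    (hiS : i ∈ S) (hiT : i ∈ T) : S = T := by
  by_contra hne
  have hpair : ({S, T} : Finset _).sum (fun S => S.count i) ≤ μ.sum fun S => S.count i :=
    Finset.sum_le_sum_of_subset (Finset.insert_subset hS (Finset.singleton_subset_iff.2 hT))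
  rw [Finset.sum_pair hne, hμ.2 i] at hpair
  have := List.count_pos_iff.2 hiS
  have := List.count_pos_iff.2 hiT
  omega

theorem bpBlock_spec (hμ : IsBP n μ) (i : Fin n) :
    bpBlock μ i ∈ μ ∧ i ∈ bpBlock μ i := by
  rw [bpBlock, dif_pos (hμ.exists_mem i)]
  exact (hμ.exists_mem i).choose_spec

theorem bpBlock_mem (hμ : IsBP n μ) (i : Fin n) : bpBlock μ i ∈ μ :=
  (hμ.bpBlock_spec i).1

theorem mem_bpBlock (hμ : IsBP n μ) (i : Fin n) : i ∈ bpBlock μ i :=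
  (hμ.bpBlock_spec i).2

theorem bpBlock_eq (hμ : IsBP n μ) {S : List (Fin n)} (hS : S ∈ μ) {i : Fin n} (hi : i ∈ S) :
    bpBlock μ i = S :=
  hμ.eq_of_mem (hμ.bpBlock_mem i) hS (hμ.mem_bpBlock i) hi

theorem bpPos_lt_bpPeriod (hμ : IsBP n μ) (i : Fin n) : bpPos μ i < bpPeriod μ i :=
  List.idxOf_lt_length_iff.2 (hμ.mem_bpBlock i)

theorem bpPos_getElem (hμ : IsBP n μ) {S : List (Fin n)} (hS : S ∈ μ) {v : ℕ}
    (hv : v < S.length) : bpPos μ S[v] = v := by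
  rw [bpPos, hμ.bpBlock_eq hS (List.getElem_mem hv), (hμ.nodup hS).idxOf_getElem]

theorem bpPeriod_getElem (hμ : IsBP n μ) {S : List (Fin n)} (hS : S ∈ μ) {v : ℕ}
    (hv : v < S.length) : bpPeriod μ S[v] = S.length := by
  rw [bpPeriod, hμ.bpBlock_eq hS (List.getElem_mem hv)]

theorem exists_bpPos_eq (hμ : IsBP n μ) {i : Fin n} {v : ℕ} (hv : v < bpPeriod μ i) :
    ∃ j, bpPos μ j = v ∧ bpPeriod μ j = bpPeriod μ i :=
  ⟨_, hμ.bpPos_getElem (hμ.bpBlock_mem i) hv, hμ.bpPeriod_getElem (hμ.bpBlock_mem i) hv⟩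

theorem length_pos (hμ : IsBP n μ) {S : List (Fin n)} (hS : S ∈ μ) : 0 < S.length :=
  List.length_pos_iff.2 (hμ.1 S hS)

theorem bpLen_pos (hμ : IsBP n μ) : 0 < bpLen μ := by
  refine Nat.pos_of_ne_zero fun h => ?_
  obtain ⟨S, hS, hlen⟩ := Finset.lcm_eq_zero_iff.1 h
  exact (hμ.length_pos hS).ne' hlen

theorem bpPos_lt_bpLen (hμ : IsBP n μ) (i : Fin n) : bpPos μ i < bpLen μ :=
  (hμ.bpPos_lt_bpPeriod i).trans_le
    (Nat.le_of_dvd hμ.bpLen_pos (length_dvd_bpLen (hμ.bpBlock_mem i)))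

theorem mem_blockAt_iff (hμ : IsBP n μ) {i : Fin n} {t : ℕ} :
    i ∈ blockAt μ t ↔ t % bpPeriod μ i = bpPos μ i := by
  simp only [blockAt, Finset.mem_biUnion, Option.mem_toFinset, Option.mem_def]
  constructor
  · rintro ⟨S, hS, hi⟩
    have hlt := Nat.mod_lt t (hμ.length_pos hS)
    rw [List.getElem?_eq_getElem hlt, Option.some_inj] at hi
    rw [← hi, hμ.bpPos_getElem hS hlt, hμ.bpPeriod_getElem hS hlt]
  · intro h
    refine ⟨bpBlock μ i, hμ.bpBlock_mem i, ?_⟩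
    rw [show t % (bpBlock μ i).length = bpPos μ i from h,
      List.getElem?_eq_getElem (hμ.bpPos_lt_bpPeriod i)]
    exact congrArg some (List.getElem_idxOf _)

theorem exists_lt_mem_blockAt_iff (hμ : IsBP n μ) {i : Fin n} {t : ℕ} :
    (∃ s < t, i ∈ blockAt μ s) ↔ bpPos μ i < t := by
  simp only [hμ.mem_blockAt_iff]
  exact ⟨fun ⟨s, hs, h⟩ => (h ▸ Nat.mod_le s _).trans_lt hs,
    fun h => ⟨bpPos μ i, h, Nat.mod_eq_of_lt (hμ.bpPos_lt_bpPeriod i)⟩⟩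

theorem bpUpdate_orderNet_eq_true_iff (hμ : IsBP n μ) {a b : Fin n} (hab : a ≠ b) :
    bpUpdate (orderNet a b) μ (fun _ => false) b = true ↔ bpPos μ b ≤ bpPos μ a := by
  rw [bpUpdate_eq_traj, orderNet]
  generalize hx : traj _ (blockAt μ) (fun _ => false) = x
  have ha : ∀ t, x t a = true ↔ bpPos μ a < t := by
    intro t
    rw [← hx, traj_latchNet_eq_true_iff]
    simp [hμ.exists_lt_mem_blockAt_iff]
  rw [← hx, traj_latchNet_eq_true_iff, hx]
  simp only [hab.symm, hμ.mem_blockAt_iff, decide_true, decide_false, Bool.true_and,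
    Bool.false_or, Bool.false_eq_true, false_or, Bool.not_eq_true', ← Bool.not_eq_true, ha,
    not_lt]
  constructor
  · rintro ⟨t, -, ht, hta⟩
    exact (ht ▸ Nat.mod_le t _).trans hta
  · exact fun h => ⟨_, hμ.bpPos_lt_bpLen b, Nat.mod_eq_of_lt (hμ.bpPos_lt_bpPeriod b), h⟩

theorem bpUpdate_fireNet_eq_true_iff (hμ : IsBP n μ) {i b c : Fin n} (hbi : b ≠ i)
    (hci : c ≠ i) (hbc : b ≠ c) :
    bpUpdate (fireNet i b c) μ (fun _ => false) i = true ↔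
      ∃ t < bpLen μ, i ∈ blockAt μ t ∧ bpPos μ b < t ∧
        ∀ s < t, c ∈ blockAt μ s → s ≤ bpPos μ b := by
  rw [bpUpdate_eq_traj, fireNet]
  generalize hx : traj _ (blockAt μ) (fun _ => false) = x
  have hb : ∀ t, x t b = true ↔ bpPos μ b < t := by
    intro t
    rw [← hx, traj_latchNet_eq_true_iff]
    simp [hμ.exists_lt_mem_blockAt_iff]
  have hc : ∀ t, x t c = true ↔ ∃ s < t, c ∈ blockAt μ s ∧ bpPos μ b < s := by
    intro t
    rw [← hx, traj_latchNet_eq_true_iff, hx]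
    simp [hbc.symm, hci, hb]
  rw [← hx, traj_latchNet_eq_true_iff, hx]
  simp [hbi.symm, hci.symm, hb, ← Bool.not_eq_true, hc]

theorem bpPos_le_of_lt_imp_lt (hμ : IsBP n μ)
    (h : ∀ a b, bpPos μ a < bpPos μ b → bpPos μ' a < bpPos μ' b) (i : Fin n) :
    bpPos μ i ≤ bpPos μ' i := by
  induction hv : bpPos μ i using Nat.strong_induction_on generalizing i with
  | _ v ih =>
  rcases v with _ | v
  · exact Nat.zero_le _
  · obtain ⟨j, hj, -⟩ := hμ.exists_bpPos_eq (i := i) (v := v)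
      (by have := hμ.bpPos_lt_bpPeriod i; omega)
    have := ih v (by omega) j hj
    have := h j i (by omega)
    omega

theorem bpPos_eq_of_forall_bpUpdate_eq (hμ : IsBP n μ) (hμ' : IsBP n μ')
    (hdyn : ∀ f, bpUpdate f μ = bpUpdate f μ') (i : Fin n) : bpPos μ i = bpPos μ' i := by
  have hlt : ∀ a b, bpPos μ a < bpPos μ b ↔ bpPos μ' a < bpPos μ' b := by
    intro a b
    by_cases hab : a = b
    · simp [hab]
    rw [← not_le, ← not_le, ← hμ.bpUpdate_orderNet_eq_true_iff hab,
      ← hμ'.bpUpdate_orderNet_eq_true_iff hab, hdyn]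
  exact le_antisymm (hμ.bpPos_le_of_lt_imp_lt (fun a b => (hlt a b).1) i)
    (hμ'.bpPos_le_of_lt_imp_lt (fun a b => (hlt a b).2) i)

theorem card_filter_lt_length (hμ : IsBP n μ) (v : ℕ) :
    (μ.filter fun S => v < S.length).card =
      (Finset.univ.filter fun j => bpPos μ j = v).card := by
  refine Finset.card_bij (fun S hS => S[v]'(Finset.mem_filter.1 hS).2) ?_ ?_ ?_
  · intro S hS
    rw [Finset.mem_filter] at hS ⊢
    exact ⟨Finset.mem_univ _, hμ.bpPos_getElem hS.1 hS.2⟩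
  · intro S hS T hT heq
    rw [Finset.mem_filter] at hS hT
    exact hμ.eq_of_mem hS.1 hT.1 (List.getElem_mem hS.2) (heq ▸ List.getElem_mem hT.2)
  · intro j hj
    obtain rfl := (Finset.mem_filter.1 hj).2
    exact ⟨bpBlock μ j, Finset.mem_filter.2 ⟨hμ.bpBlock_mem j, hμ.bpPos_lt_bpPeriod j⟩,
      List.getElem_idxOf _⟩

theorem exists_length_eq (hμ : IsBP n μ) (hμ' : IsBP n μ')
    (hpos : ∀ j, bpPos μ j = bpPos μ' j) {S : List (Fin n)} (hS : S ∈ μ) :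
    ∃ S' ∈ μ', S'.length = S.length := by
  have hcard : ∀ v, (μ.filter fun S => v < S.length).card =
      (μ'.filter fun S => v < S.length).card := by
    intro v
    simp only [hμ.card_filter_lt_length, hμ'.card_filter_lt_length, hpos]
  by_contra! h
  have hsub : (μ'.filter fun T => S.length - 1 < T.length) ⊆
      μ'.filter fun T => S.length < T.length := by
    intro T hT
    rw [Finset.mem_filter] at hT ⊢
    exact ⟨hT.1, by have := h T hT.1; omega⟩
  have hssub : (μ.filter fun T => S.length < T.length) ⊂
      μ.filter fun T => S.length - 1 < T.length := by
    refine (Finset.ssubset_iff_of_subset fun T hT => ?_).2 ⟨S, ?_, ?_⟩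
    · rw [Finset.mem_filter] at hT ⊢
      exact ⟨hT.1, by omega⟩
    · exact Finset.mem_filter.2 ⟨hS, by have := hμ.length_pos hS; omega⟩
    · simp
  have hlt := Finset.card_lt_card hssub
  have hle := Finset.card_le_card hsub
  rw [hcard, hcard] at hlt
  omega

theorem bpLen_eq_of_bpPos_eq (hμ : IsBP n μ) (hμ' : IsBP n μ')
    (hpos : ∀ j, bpPos μ j = bpPos μ' j) : bpLen μ = bpLen μ' :=
  Nat.dvd_antisymm
    (bpLen_dvd_of_forall_exists_length_eq fun _ => hμ.exists_length_eq hμ' hpos)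
    (bpLen_dvd_of_forall_exists_length_eq fun _ =>
      hμ'.exists_length_eq hμ fun j => (hpos j).symm)

/-- `b` switches on between the first two updates of `i` under `μ`; `c`, armed by `b`, switches
on between the second update of `i` under `μ` and its second update under `μ'`. -/
theorem exists_fireNet_witnesses (hμ : IsBP n μ) (hμ' : IsBP n μ')
    (hpos : ∀ j, bpPos μ j = bpPos μ' j) {i : Fin n} (hlt : bpPeriod μ i < bpPeriod μ' i) :
    ∃ b c, b ≠ i ∧ c ≠ i ∧ b ≠ c ∧
      bpPos μ i ≤ bpPos μ b ∧ bpPos μ b < bpPos μ i + bpPeriod μ i ∧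
      (∃ τ < bpPos μ i + bpPeriod μ' i, bpPos μ b < τ ∧ c ∈ blockAt μ' τ) ∧
      ∀ s < bpPos μ i + bpPeriod μ i, c ∈ blockAt μ' s → s ≤ bpPos μ b := by
  have hq := hμ.bpPos_lt_bpPeriod i
  by_cases hp : bpPeriod μ i = 1
  · obtain ⟨c, hc, hc'⟩ := hμ'.exists_bpPos_eq (i := i) (v := 1) (by omega)
    have hcμ : bpPos μ c = 1 := (hpos c).trans hc
    obtain ⟨b, hb, hb'⟩ := hμ.exists_bpPos_eq (i := c) (v := 0)
      (by have := hμ.bpPos_lt_bpPeriod c; omega)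
    have hbper : bpPeriod μ b ≠ bpPeriod μ i := by
      have := hμ.bpPos_lt_bpPeriod c; omega
    refine ⟨b, c, fun h => hbper (h ▸ rfl), fun h => ?_, fun h => ?_, by omega, by omega,
      ⟨1, by omega, by omega, ?_⟩, fun s hs _ => by omega⟩
    · rw [h] at hcμ; omega
    · rw [h] at hb; omega
    · rw [hμ'.mem_blockAt_iff, hc, hc']
      exact Nat.mod_eq_of_lt (by omega)
  · obtain ⟨b, hb, -⟩ := hμ'.exists_bpPos_eq (i := i) (v := bpPos μ i + 1) (by omega)
    obtain ⟨S', hS', hlen⟩ := hμ.exists_length_eq hμ' hpos (hμ.bpBlock_mem i)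
    replace hlen : S'.length = bpPeriod μ i := hlen
    have hqS' : bpPos μ i < S'.length := by rw [hlen]; exact hq
    have hc := hμ'.bpPos_getElem hS' hqS'
    have hc' := hμ'.bpPeriod_getElem hS' hqS'
    rw [hlen] at hc'
    generalize S'[bpPos μ i] = c at hc hc'
    have hbμ : bpPos μ b = bpPos μ i + 1 := (hpos b).trans hb
    refine ⟨b, c, fun h => ?_, fun h => ?_, fun h => ?_, by omega, by omega,
      ⟨bpPos μ i + bpPeriod μ i, by omega, by omega, ?_⟩, fun s hs hcs => ?_⟩
    · rw [h] at hbμ; omega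
    · rw [h] at hc'; exact hlt.ne hc'.symm
    · rw [h, hc] at hb; omega
    · rw [hμ'.mem_blockAt_iff, hc, hc', Nat.add_mod_right]
      exact Nat.mod_eq_of_lt hq
    · rw [hμ'.mem_blockAt_iff, hc, hc'] at hcs
      have := eq_or_add_le_of_mod_eq hq hcs
      omega

theorem mem_blockAt_of_forall_bpUpdate_eq (hμ : IsBP n μ) (hμ' : IsBP n μ')
    (hdyn : ∀ f, bpUpdate f μ = bpUpdate f μ') {t : ℕ} (ht : t < bpLen μ)
    (hagree : ∀ s < t, blockAt μ s = blockAt μ' s) {i : Fin n} (hi : i ∈ blockAt μ t) :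
    i ∈ blockAt μ' t := by
  by_contra hi'
  have hpos := hμ.bpPos_eq_of_forall_bpUpdate_eq hμ' hdyn
  have hq' : bpPos μ i < bpPeriod μ' i := hpos i ▸ hμ'.bpPos_lt_bpPeriod i
  obtain ⟨rfl, hlt⟩ : t = bpPos μ i + bpPeriod μ i ∧ bpPeriod μ i < bpPeriod μ' i := by
    rw [hμ.mem_blockAt_iff] at hi
    rw [hμ'.mem_blockAt_iff, ← hpos] at hi'
    refine eq_add_and_lt_of_first_mod_ne (hμ.bpPos_lt_bpPeriod i) hq' hi hi' fun s hs => ?_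
    rw [← hμ.mem_blockAt_iff, hagree s hs, hμ'.mem_blockAt_iff, hpos]
  obtain ⟨b, c, hbi, hci, hbc, hqb, hbt, ⟨τ, hτ, hbτ, hcτ⟩, hc⟩ :=
    hμ.exists_fireNet_witnesses hμ' hpos hlt
  have hfire := hμ.bpUpdate_fireNet_eq_true_iff hbi hci hbc
  rw [hdyn, hμ'.bpUpdate_fireNet_eq_true_iff hbi hci hbc, ← hpos] at hfire
  obtain ⟨t, -, hit, hbt', hct⟩ :=
    hfire.2 ⟨_, ht, hi, hbt, fun s hs hcs => hc s hs (hagree s hs ▸ hcs)⟩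
  rw [hμ'.mem_blockAt_iff, ← hpos] at hit
  rcases eq_or_add_le_of_mod_eq hq' hit with rfl | hle
  · omega
  · have := hct τ (by omega) hcτ
    omega

theorem blockAt_eq_of_forall_bpUpdate_eq (hμ : IsBP n μ) (hμ' : IsBP n μ')
    (hdyn : ∀ f, bpUpdate f μ = bpUpdate f μ') (hlen : bpLen μ = bpLen μ') :
    ∀ t < bpLen μ, blockAt μ t = blockAt μ' t := by
  intro t
  induction t using Nat.strong_induction_on with
  | _ t ih =>
  intro ht
  have hagree : ∀ s < t, blockAt μ s = blockAt μ' s := fun s hs => ih s hs (hs.trans ht)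
  ext i
  exact ⟨hμ.mem_blockAt_of_forall_bpUpdate_eq hμ' hdyn ht hagree,
    hμ'.mem_blockAt_of_forall_bpUpdate_eq hμ (fun f => (hdyn f).symm) (hlen ▸ ht)
      fun s hs => (hagree s hs).symm⟩

end IsBP

/-- Two block-parallel update schedules have the same block-sequence form `φ`
iff every Boolean automata network has the exact same dynamics under both. -/
theorem phi_eq_iff_forall_dynamics_eq (n : ℕ) (μ μ' : Finset (List (Fin n)))
    (hμ : IsBP n μ) (hμ' : IsBP n μ') :
    phiBP μ = phiBP μ' ↔
      ∀ f : Fin n → (Fin n → Bool) → Bool, bpUpdate f μ = bpUpdate f μ' := by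
  refine ⟨fun h f => by rw [bpUpdate, bpUpdate, h], fun hdyn => ?_⟩
  have hlen := hμ.bpLen_eq_of_bpPos_eq hμ' (hμ.bpPos_eq_of_forall_bpUpdate_eq hμ' hdyn)
  rw [phiBP, phiBP, ← hlen]
  exact List.map_congr_left fun t ht =>
    hμ.blockAt_eq_of_forall_bpUpdate_eq hμ' hdyn hlen t (List.mem_range.1 ht)
end

section
/- If μ, μ' ∈ BP_n satisfy φ(μ) = σ^{î}(φ(μ')) with φ(μ) = (W_0,…,W_{p−1}) and φ(μ') = (W'_0,…,W'_{p−1}), then for any automata network f over finite alphabets, the map π = f^{(W_{î−1})} ∘ ⋯ ∘ f^{(W_0)} restricts to a bijection from the limit set Ω_{f^{⟨μ⟩}} onto the limit set Ω_{f^{⟨μ'⟩}} satisfying π ∘ f^{⟨μ⟩} = f^{⟨μ'⟩} ∘ π on Ω_{f^{⟨μ⟩}}. -/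
open Finset Nat

/-- Update of the automata in block `W`, over arbitrary alphabets `X i`. -/
def blockUpdateG {n : ℕ} {X : Fin n → Type} (f : ∀ i, (∀ j, X j) → X i)
    (W : Finset (Fin n)) (x : ∀ j, X j) : ∀ j, X j :=
  fun i => if i ∈ W then f i x else x i

/-- Sequential application of a list of block updates (leftmost block first). -/
def seqUpdateG {n : ℕ} {X : Fin n → Type} (f : ∀ i, (∀ j, X j) → X i)
    (Ws : List (Finset (Fin n))) (x : ∀ j, X j) : ∀ j, X j :=
  Ws.foldl (fun y W => blockUpdateG f W y) x

/-- The block-parallel dynamics `f^⟨μ⟩ = f^{(W_{ℓ−1})} ∘ ⋯ ∘ f^{(W_0)}`. -/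
def bpUpdateG {n : ℕ} {X : Fin n → Type} (f : ∀ i, (∀ j, X j) → X i)
    (μ : Finset (List (Fin n))) : (∀ j, X j) → (∀ j, X j) :=
  seqUpdateG f (phiBP μ)

/-- The limit set `Ω_g = ⋂_{t ∈ ℕ} g^t(X)` of `g : X → X`. -/
def limitSet {Y : Type} (g : Y → Y) : Set Y :=
  ⋂ t : ℕ, Set.range g^[t]

/-!
Splitting `φ(μ)` after its first `î` blocks writes `f^⟨μ⟩ = b ∘ π`, with `b` the update of the
remaining blocks, and the rotation hypothesis gives `f^⟨μ'⟩ = π ∘ b`, so the conjugation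
identity holds everywhere. What remains is a fact about any two maps `a : Y → Z`, `b : Z → Y`
between finite sets: `a` maps `Ω_{b ∘ a}` bijectively onto `Ω_{a ∘ b}`. On a finite set the
decreasing sequence `g^t(Y)` stabilises, so `g` maps `Ω_g` onto itself and hence bijectively;
`a` semiconjugates `b ∘ a` to `a ∘ b`, so it maps `Ω_{b ∘ a}` into `Ω_{a ∘ b}`, injectively
since `b ∘ a` is injective there, and surjectively since `Ω_{a ∘ b} = a (b Ω_{a ∘ b})` with
`b Ω_{a ∘ b} ⊆ Ω_{b ∘ a}`.
-/

section LimitSet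

variable {Y Z : Type}

theorem antitone_range_iterate (g : Y → Y) : Antitone fun t => Set.range g^[t] := by
  intro s t hst
  obtain ⟨k, rfl⟩ := Nat.exists_eq_add_of_le hst
  dsimp only
  rw [Function.iterate_add]
  exact Set.range_comp_subset_range _ _

theorem Function.Semiconj.mapsTo_limitSet {a : Y → Z} {ga : Y → Y} {gb : Z → Z}
    (h : Function.Semiconj a ga gb) : Set.MapsTo a (limitSet ga) (limitSet gb) := by
  intro y hy
  refine Set.mem_iInter.mpr fun t => ?_
  obtain ⟨x, rfl⟩ := Set.mem_iInter.mp hy t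
  exact ⟨a x, (h.iterate_right t x).symm⟩

theorem exists_limitSet_eq_range_iterate [Finite Y] (g : Y → Y) :
    ∃ T, ∀ t, T ≤ t → limitSet g = Set.range g^[t] := by
  obtain ⟨T, hT⟩ := WellFoundedLT.antitone_chain_condition (antitone_range_iterate g)
  have hlim : limitSet g = Set.range g^[T] := by
    refine (Set.iInter_subset _ T).antisymm (Set.subset_iInter fun t => ?_)
    rcases le_total T t with hTt | htT
    · exact (hT t hTt).le
    · exact antitone_range_iterate g htT
  exact ⟨T, fun t ht => hlim.trans (hT t ht)⟩

theorem image_limitSet [Finite Y] (g : Y → Y) : g '' limitSet g = limitSet g := by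
  obtain ⟨T, hT⟩ := exists_limitSet_eq_range_iterate g
  calc g '' limitSet g = Set.range g^[T + 1] := by
        rw [hT T le_rfl, ← Set.range_comp, ← Function.iterate_succ']
    _ = limitSet g := (hT (T + 1) T.le_succ).symm

theorem bijOn_limitSet [Finite Y] (g : Y → Y) : Set.BijOn g (limitSet g) (limitSet g) := by
  have hmaps : Set.MapsTo g (limitSet g) (limitSet g) :=
    Set.mapsTo_iff_image_subset.mpr (image_limitSet g).le
  exact ((Set.toFinite _).surjOn_iff_bijOn_of_mapsTo hmaps).mp (image_limitSet g).ge

theorem bijOn_limitSet_comp [Finite Y] [Finite Z] (a : Y → Z) (b : Z → Y) :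
    Set.BijOn a (limitSet (b ∘ a)) (limitSet (a ∘ b)) := by
  have semiconj_a : Function.Semiconj a (b ∘ a) (a ∘ b) := fun _ => rfl
  have semiconj_b : Function.Semiconj b (a ∘ b) (b ∘ a) := fun _ => rfl
  refine ⟨semiconj_a.mapsTo_limitSet, ?_, ?_⟩
  · intro x hx y hy hxy
    exact (bijOn_limitSet (b ∘ a)).injOn hx hy (congrArg b hxy)
  · intro z hz
    obtain ⟨w, hw, rfl⟩ := (bijOn_limitSet (a ∘ b)).surjOn hz
    exact ⟨b w, semiconj_b.mapsTo_limitSet hw, rfl⟩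

end LimitSet

section SeqUpdate

variable {n : ℕ} {X : Fin n → Type} (f : ∀ i, (∀ j, X j) → X i)

theorem seqUpdateG_append (A B : List (Finset (Fin n))) :
    seqUpdateG f (A ++ B) = seqUpdateG f B ∘ seqUpdateG f A :=
  funext fun _ => List.foldl_append

theorem seqUpdateG_eq_drop_comp_take (L : List (Finset (Fin n))) (i : ℕ) :
    seqUpdateG f L = seqUpdateG f (L.drop i) ∘ seqUpdateG f (L.take i) := by
  rw [← seqUpdateG_append, List.take_append_drop]

theorem seqUpdateG_rotate {L : List (Finset (Fin n))} {i : ℕ} (hi : i ≤ L.length) :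
    seqUpdateG f (L.rotate i) = seqUpdateG f (L.take i) ∘ seqUpdateG f (L.drop i) := by
  rw [List.rotate_eq_drop_append_take hi, seqUpdateG_append]

end SeqUpdate

theorem shift_conjugates_limit_dynamics_general (n : ℕ) (μ μ' : Finset (List (Fin n)))
    (i : ℕ) (hi : i < (phiBP μ).length)
    (hrot : phiBP μ' = (phiBP μ).rotate i)
    (X : Fin n → Type) [∀ j, Fintype (X j)]
    (f : ∀ j : Fin n, (∀ k, X k) → X j) :
    Set.BijOn (seqUpdateG f ((phiBP μ).take i))
        (limitSet (bpUpdateG f μ)) (limitSet (bpUpdateG f μ')) ∧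
      ∀ x ∈ limitSet (bpUpdateG f μ),
        seqUpdateG f ((phiBP μ).take i) (bpUpdateG f μ x) =
          bpUpdateG f μ' (seqUpdateG f ((phiBP μ).take i) x) := by
  have split_μ : bpUpdateG f μ =
      seqUpdateG f ((phiBP μ).drop i) ∘ seqUpdateG f ((phiBP μ).take i) :=
    seqUpdateG_eq_drop_comp_take f _ i
  have split_μ' : bpUpdateG f μ' =
      seqUpdateG f ((phiBP μ).take i) ∘ seqUpdateG f ((phiBP μ).drop i) := by
    rw [bpUpdateG, hrot, seqUpdateG_rotate f hi.le]
  rw [split_μ, split_μ']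
  exact ⟨bijOn_limitSet_comp _ _, fun _ _ => rfl⟩

/-- If `φ(μ) = σ^î(φ(μ'))`, i.e. `φ(μ') = φ(μ)` rotated left by `î`, then for any
automata network `f` over finite alphabets, `π = f^{(W_{î−1})} ∘ ⋯ ∘ f^{(W_0)}`
(the update of the first `î` blocks of `φ(μ)`) restricts to a bijection from the
limit set of `f^⟨μ⟩` onto that of `f^⟨μ'⟩`, conjugating the two dynamics. -/
theorem shift_conjugates_limit_dynamics (n : ℕ) (μ μ' : Finset (List (Fin n)))
    (hμ : IsBP n μ) (hμ' : IsBP n μ') (i : ℕ) (hi : i < (phiBP μ).length)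
    (hrot : phiBP μ' = (phiBP μ).rotate i)
    (X : Fin n → Type) [∀ j, Fintype (X j)] [∀ j, Nonempty (X j)]
    (f : ∀ j : Fin n, (∀ k, X k) → X j) :
    Set.BijOn (seqUpdateG f ((phiBP μ).take i))
        (limitSet (bpUpdateG f μ)) (limitSet (bpUpdateG f μ')) ∧
      ∀ x ∈ limitSet (bpUpdateG f μ),
        seqUpdateG f ((phiBP μ).take i) (bpUpdateG f μ x) =
          bpUpdateG f μ' (seqUpdateG f ((phiBP μ).take i) x) :=
  shift_conjugates_limit_dynamics_general n μ μ' i hi hrot X f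
end
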